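/- Let H be a real Hilbert space and T : H →L H a compact, positive, self-adjoint bounded linear operator. Let ν ∈ (0, 1], g ∈ H, and set f_ρ := T^ν g, where T^ν is the fractional power of T defined by the continuous functional calculus applied to s ↦ s^ν on the spectrum of T. Then for every λ > 0 and every h ∈ H satisfying (T + λI) h = T f_ρ (i.e., h = (T + λI)^{−1} T f_ρ, the Tikhonov-regularized approximation), one has ‖h − f_ρ‖ ≤ λ^ν ‖g‖. -/

import Mathlib

/-- Key scalar inequality: `lam * m ^ ν ≤ lam ^ ν * (m + lam)` by weighted AM-GM. -/
lemma tikhonov_key_ineq {lam m ν : ℝ} (hlam : 0 < lam) (hm : 0 ≤ m)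
    (hν0 : 0 < ν) (hν1 : ν ≤ 1) : lam * m ^ ν ≤ lam ^ ν * (m + lam) := by
  have hamgm : lam ^ (1 - ν) * m ^ ν ≤ (1 - ν) * lam + ν * m :=
    Real.geom_mean_le_arith_mean2_weighted (by linarith) hν0.le hlam.le hm (by ring)
  have hsplit : lam * m ^ ν = lam ^ ν * (lam ^ (1 - ν) * m ^ ν) := by
    rw [← mul_assoc, ← Real.rpow_add hlam]
    norm_num
  rw [hsplit]
  have h2 : (1 - ν) * lam + ν * m ≤ m + lam := by nlinarith
  have hpos : 0 ≤ lam ^ ν := Real.rpow_nonneg hlam.le ν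
  nlinarith

/-- Lemma (source condition): let `T` be a compact positive self-adjoint bounded operator on a
real Hilbert space `H`. By the spectral theorem for such operators, `T` diagonalizes in an
orthonormal Hilbert basis `e` with nonnegative eigenvalues `μ i`, and the fractional power
`T^ν` given by the continuous functional calculus applied to `s ↦ s^ν` on the spectrum of `T`
is the operator acting diagonally by `μ i ^ ν`; thus `f_ρ := T^ν g` is the element whose
coefficients are `⟨e i, f_ρ⟩ = μ i ^ ν * ⟨e i, g⟩`. Then for every `λ > 0`, the Tikhonov
regularized approximation `h = (T + λI)⁻¹ T f_ρ` satisfies `‖h − f_ρ‖ ≤ λ^ν ‖g‖`. -/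
theorem tikhonov_approximation_error_source_condition
    {H ι : Type*} [NormedAddCommGroup H] [InnerProductSpace ℝ H] [CompleteSpace H]
    (T : H →L[ℝ] H)
    (hTcompact : IsCompactOperator T)
    (hTsa : ∀ u v : H, (inner ℝ (T u) v : ℝ) = inner ℝ u (T v))
    (hTpos : ∀ f : H, 0 ≤ (inner ℝ (T f) f : ℝ))
    (e : HilbertBasis ι ℝ H) (μ : ι → ℝ) (hμ : ∀ i, 0 ≤ μ i)
    (hTe : ∀ i, T (e i) = μ i • e i)
    (ν : ℝ) (hν0 : 0 < ν) (hν1 : ν ≤ 1)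
    (g fρ : H)
    (hfρ : ∀ i, (inner ℝ (e i) fρ : ℝ) = μ i ^ ν * (inner ℝ (e i) g : ℝ)) :
    ∀ lam : ℝ, 0 < lam → ∀ h : H, T h + lam • h = T fρ →
      ‖h - fρ‖ ≤ lam ^ ν * ‖g‖ := by
  intro lam hlam h heq
  -- inner product of T x against e i
  have hT : ∀ (i : ι) (x : H), (inner ℝ (e i) (T x) : ℝ) = μ i * inner ℝ (e i) x := by
    intro i x
    rw [← hTsa, hTe, real_inner_smul_left]
  -- coefficient of h - fρ
  set a : ι → ℝ := fun i => inner ℝ (e i) (h - fρ) with ha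
  set b : ι → ℝ := fun i => inner ℝ (e i) g with hb
  have hcoef : ∀ i, (μ i + lam) * a i = -(lam * μ i ^ ν * b i) := by
    intro i
    have h1 : (inner ℝ (e i) (T h + lam • h) : ℝ) = inner ℝ (e i) (T fρ) := by rw [heq]
    rw [inner_add_right, real_inner_smul_right, hT, hT, hfρ] at h1
    have h2 : a i = inner ℝ (e i) h - inner ℝ (e i) fρ := inner_sub_right _ _ _
    rw [h2, hfρ]
    nlinarith [h1]
  have hlamν : 0 ≤ lam ^ ν := Real.rpow_nonneg hlam.le ν
  -- pointwise bound: |a i| ≤ lam^ν * |b i|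
  have hbound : ∀ i, a i * a i ≤ (lam ^ ν) ^ 2 * (b i * b i) := by
    intro i
    have hpos : 0 < μ i + lam := by linarith [hμ i]
    have habs : |a i| ≤ lam ^ ν * |b i| := by
      rw [← mul_le_mul_iff_right₀ hpos]
      have : (μ i + lam) * |a i| = |(μ i + lam) * a i| := by
        rw [abs_mul, abs_of_pos hpos]
      rw [this, hcoef i, abs_neg, abs_mul, abs_mul,
        abs_of_pos hlam, abs_of_nonneg (Real.rpow_nonneg (hμ i) ν)]
      have hk := tikhonov_key_ineq hlam (hμ i) hν0 hν1
      calc lam * μ i ^ ν * |b i| ≤ lam ^ ν * (μ i + lam) * |b i| := by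
            apply mul_le_mul_of_nonneg_right _ (abs_nonneg _)
            exact hk.trans_eq (by ring)
        _ = (μ i + lam) * (lam ^ ν * |b i|) := by ring
    have h1 : a i * a i = |a i| ^ 2 := by rw [sq_abs]; ring
    have h2 : (lam ^ ν) ^ 2 * (b i * b i) = (lam ^ ν * |b i|) ^ 2 := by
      rw [mul_pow, sq_abs]; ring
    rw [h1, h2]
    exact pow_le_pow_left₀ (abs_nonneg _) habs 2
  -- Parseval sums
  have hsum1 : HasSum (fun i => a i * a i) ((inner ℝ (h - fρ) (h - fρ) : ℝ)) := by
    have := e.hasSum_inner_mul_inner (h - fρ) (h - fρ)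
    have hf : (fun i => a i * a i) = fun i => inner ℝ (h - fρ) (e i) * inner ℝ (e i) (h - fρ) := by
      funext i
      rw [ha, real_inner_comm]
    rw [hf]; exact this
  have hsum2 : HasSum (fun i => (lam ^ ν) ^ 2 * (b i * b i))
      ((lam ^ ν) ^ 2 * (inner ℝ g g : ℝ)) := by
    have := (e.hasSum_inner_mul_inner g g).mul_left ((lam ^ ν) ^ 2)
    have hf : (fun i => (lam ^ ν) ^ 2 * (b i * b i)) =
        fun i => (lam ^ ν) ^ 2 * (inner ℝ g (e i) * inner ℝ (e i) g) := by
      funext i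
      rw [hb, real_inner_comm]
    rw [hf]; exact this
  have hle : (inner ℝ (h - fρ) (h - fρ) : ℝ) ≤ (lam ^ ν) ^ 2 * (inner ℝ g g : ℝ) :=
    hasSum_le hbound hsum1 hsum2
  rw [real_inner_self_eq_norm_sq, real_inner_self_eq_norm_sq] at hle
  have hfin : ‖h - fρ‖ ^ 2 ≤ (lam ^ ν * ‖g‖) ^ 2 := by
    rw [mul_pow]; exact hle
  have := Real.sqrt_le_sqrt hfin
  rwa [Real.sqrt_sq (norm_nonneg _),
    Real.sqrt_sq (mul_nonneg hlamν (norm_nonneg _))] at this
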